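/- With C, g₁, g₂, Φ as above (C compact convex with nonempty interior, g_i continuous concave, Φ(μ) = ∫ g₁^∨ dμ + g₂^∨(-E[μ]) + max_C(g₁+g₂)), the function Φ is nonpositive on ℰ, and Φ(μ) = 0 if and only if supp(μ) ⊆ F(g₁,g₂) and E[μ] ∈ B(g₁,g₂), where for any maximizer x of g₁+g₂, B(g₁,g₂) = ∂g₁(x) ∩ (-∂g₂(x)) and F(g₁,g₂) is the minimal face of ∂g₁(x) containing B(g₁,g₂). -/

import Mathlib

open MeasureTheory RealInnerProductSpace

/-- The sup-differential of a concave function `g` at `x` relative to `C`. -/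
def supDiff {n : ℕ} (C : Set (EuclideanSpace ℝ (Fin n)))
    (g : EuclideanSpace ℝ (Fin n) → ℝ) (x : EuclideanSpace ℝ (Fin n)) :
    Set (EuclideanSpace ℝ (Fin n)) :=
  {u | ∀ z ∈ C, g z - g x ≤ ⟪u, z - x⟫}

/-- The Legendre–Fenchel dual `g^∨(u) = inf_{x ∈ C} (⟨u,x⟩ - g(x))`. -/
noncomputable def lfDual {n : ℕ} (C : Set (EuclideanSpace ℝ (Fin n)))
    (g : EuclideanSpace ℝ (Fin n) → ℝ) (u : EuclideanSpace ℝ (Fin n)) : ℝ :=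
  sInf ((fun x => ⟪u, x⟫ - g x) '' C)

/-- The functional `Φ(μ) = ∫ g₁^∨ dμ + g₂^∨(-E[μ]) + max_C (g₁+g₂)`. -/
noncomputable def phiFun {n : ℕ} (C : Set (EuclideanSpace ℝ (Fin n)))
    (g₁ g₂ : EuclideanSpace ℝ (Fin n) → ℝ)
    (μ : Measure (EuclideanSpace ℝ (Fin n))) : ℝ :=
  (∫ u, lfDual C g₁ u ∂μ) + lfDual C g₂ (-(∫ u, u ∂μ)) +
    sSup ((fun x => g₁ x + g₂ x) '' C)

/-- The support of a measure: points all of whose neighborhoods have positive measure. -/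
def msupport {n : ℕ} (μ : Measure (EuclideanSpace ℝ (Fin n))) :
    Set (EuclideanSpace ℝ (Fin n)) :=
  {x | ∀ U : Set (EuclideanSpace ℝ (Fin n)), IsOpen U → x ∈ U → 0 < μ U}

/-! At a maximizer `x` of `g₁ + g₂`, `Φ(μ) = ∫ φ̂₁ dμ + φ̂₂(-E[μ])` is a sum of two nonpositive
Fenchel–Young gaps, so `Φ(μ) = 0` exactly when `μ` is concentrated on `∂g₁(x)` and
`-E[μ] ∈ ∂g₂(x)`. What remains is a fact about barycenters: if a probability measure lives on a
closed convex set `K` and its barycenter lies in a face `F'` of `K`, then its support lies in `F'`.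
This goes by induction on the dimension of `K`. If the barycenter is relatively interior, every
point of `K` is the endpoint of an open segment through it, so `K ⊆ F'`. Otherwise a supporting
functional that is not constant on `K` exposes a face of smaller dimension, and since the mean
of the functional equals its maximum, that face carries all of `μ`. -/

open Set Filter Topology Module
open scoped NNReal

theorem add_eq_zero_iff_of_nonpos {α : Type*} [AddZeroClass α] [PartialOrder α] [AddLeftMono α]
    [AddRightMono α] {a b : α} (ha : a ≤ 0) (hb : b ≤ 0) : a + b = 0 ↔ a = 0 ∧ b = 0 :=
  add_eq_zero_iff_of_nonneg (α := αᵒᵈ) ha hb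

section

variable {E : Type*} [NormedAddCommGroup E] [NormedSpace ℝ E]

theorem Convex.exists_supporting_of_notMem_interior {D : Set E} (hD : Convex ℝ D)
    (hDint : (interior D).Nonempty) {β : E} (hβ : β ∉ interior D) :
    ∃ f : StrongDual ℝ E, (∀ u ∈ D, f u ≤ f β) ∧ ∃ z ∈ D, f z < f β := by
  obtain ⟨f, hf⟩ := geometric_hahn_banach_open_point hD.interior isOpen_interior hβ
  obtain ⟨z, hz⟩ := hDint
  refine ⟨f, fun u hu => ?_, z, interior_subset hz, hf z hz⟩
  have hu' : u ∈ closure (interior D) := by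
    rw [hD.closure_interior_eq_closure_of_nonempty_interior ⟨z, hz⟩]
    exact subset_closure hu
  exact closure_minimal (fun a ha => (hf a ha).le) (isClosed_le f.continuous continuous_const) hu'

theorem exists_mem_openSegment_of_mem_interior {D : Set E} {β : E} (hβ : β ∈ interior D)
    (z : E) : ∃ w ∈ D, β ∈ openSegment ℝ z w := by
  have hlim : Tendsto (AffineMap.lineMap z β) (𝓝[>] (1 : ℝ)) (𝓝 β) :=
    ((AffineMap.lineMap_continuous).tendsto' 1 β (by simp)).mono_left nhdsWithin_le_nhds
  obtain ⟨s, hsD, hs⟩ :=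
    ((hlim.eventually (mem_interior_iff_mem_nhds.1 hβ)).and self_mem_nhdsWithin).exists
  refine ⟨AffineMap.lineMap z β s, hsD, ?_⟩
  rw [openSegment_eq_image_lineMap]
  refine ⟨s⁻¹, ⟨inv_pos.2 (zero_lt_one.trans hs), inv_lt_one_of_one_lt₀ hs⟩, ?_⟩
  rw [AffineMap.lineMap_lineMap_right, inv_mul_cancel₀ (zero_lt_one.trans hs).ne',
    AffineMap.lineMap_apply_one]

theorem Convex.exists_supporting_or_mem_openSegment [FiniteDimensional ℝ E] {K : Set E}
    (hK : Convex ℝ K) {β : E} (hβ : β ∈ K) :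
    (∃ f : StrongDual ℝ E, (∀ u ∈ K, f u ≤ f β) ∧ ∃ z ∈ K, f z < f β) ∨
      ∀ z ∈ K, ∃ w ∈ K, β ∈ openSegment ℝ z w := by
  set A := affineSpan ℝ K
  have : Nonempty K := ⟨⟨β, hβ⟩⟩
  -- Coordinates on `A` centred at `β`, in which `K` becomes a convex set with nonempty interior.
  let ψ : A.direction ≃ᵃ[ℝ] A := AffineEquiv.vaddConst ℝ ⟨β, subset_affineSpan ℝ K hβ⟩
  let φ : A.direction →ᵃ[ℝ] E := A.subtype.comp ψ.toAffineMap
  have hφ : ∀ v, φ v = (v : E) + β := fun v => rfl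
  let toDir (u : E) (hu : u ∈ K) : A.direction :=
    ⟨u - β, AffineSubspace.vsub_mem_direction (subset_affineSpan ℝ K hu)
      (subset_affineSpan ℝ K hβ)⟩
  have hφtoDir : ∀ u hu, φ (toDir u hu) = u := fun u hu => by simp [hφ, toDir]
  have hDconv : Convex ℝ (φ ⁻¹' K) := hK.affine_preimage φ
  have hDint : (interior (φ ⁻¹' K)).Nonempty := by
    have hD : φ ⁻¹' K = ψ ⁻¹' ((↑) ⁻¹' K : Set A) := rfl
    rw [hDconv.interior_nonempty_iff_affineSpan_eq_top, hD, ← AffineSubspace.comap_span,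
      affineSpan_coe_preimage_eq_top, AffineSubspace.comap_top]
  by_cases h0 : (0 : A.direction) ∈ interior (φ ⁻¹' K)
  · right
    intro z hz
    obtain ⟨w, hw, hseg⟩ := exists_mem_openSegment_of_mem_interior h0 (toDir z hz)
    refine ⟨φ w, hw, ?_⟩
    rw [← hφtoDir z hz, ← image_openSegment]
    exact ⟨0, hseg, by simp [hφ]⟩
  · left
    obtain ⟨f, hfle, z, hz, hlt⟩ := hDconv.exists_supporting_of_notMem_interior hDint h0
    obtain ⟨g, hg, -⟩ := exists_extension_norm_eq A.direction f
    have hgφ : ∀ v, g (φ v) = f v + g β := fun v => by rw [hφ, map_add, hg]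
    refine ⟨g, fun u hu => ?_, φ z, hz, ?_⟩
    · have hle := hfle (toDir u hu) (by rw [mem_preimage, hφtoDir u hu]; exact hu)
      have h := hgφ (toDir u hu)
      rw [hφtoDir u hu] at h
      rw [map_zero] at hle
      linarith
    · have := hgφ z
      rw [map_zero] at hlt
      linarith

theorem ContinuousLinearMap.finrank_vectorSpan_toExposed_lt [FiniteDimensional ℝ E]
    {K : Set E} {f : StrongDual ℝ E} {β z : E} (hβ : β ∈ f.toExposed K) (hz : z ∈ K)
    (hlt : f z < f β) :
    finrank ℝ (vectorSpan ℝ (f.toExposed K)) < finrank ℝ (vectorSpan ℝ K) := by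
  refine Submodule.finrank_lt_finrank_of_lt
    (lt_of_le_of_ne (vectorSpan_mono ℝ fun _ h => h.1) fun heq => ?_)
  have hker : vectorSpan ℝ (f.toExposed K) ≤ LinearMap.ker (f : E →ₗ[ℝ] ℝ) := by
    rw [vectorSpan_def]
    refine Submodule.span_le.2 ?_
    rintro _ ⟨p, hp, q, hq, rfl⟩
    simp [le_antisymm (hp.2 q hq.1) (hq.2 p hp.1)]
  have := hker (heq ▸ vsub_mem_vectorSpan ℝ hz hβ.1)
  simp only [vsub_eq_sub, LinearMap.mem_ker, ContinuousLinearMap.coe_coe, map_sub] at this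
  linarith

variable [MeasurableSpace E] {μ : Measure E} [IsProbabilityMeasure μ]

theorem ae_mem_toExposed_of_forall_le_integral [CompleteSpace E] {K : Set E}
    {f : StrongDual ℝ E} (hint : Integrable id μ) (hμK : ∀ᵐ u ∂μ, u ∈ K)
    (hf : ∀ u ∈ K, f u ≤ f (∫ u, u ∂μ)) : ∀ᵐ u ∂μ, u ∈ f.toExposed K := by
  have hfae : (fun u => f u) =ᵐ[μ] fun _ => f (∫ u, u ∂μ) := by
    refine (integral_eq_iff_of_ae_le (f.integrable_comp hint) (integrable_const _)
      (hμK.mono hf)).1 ?_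
    rw [f.integral_comp_comm hint, integral_const]
    simp
  filter_upwards [hμK, hfae] with u hu hfu
  exact ⟨hu, fun y hy => hfu ▸ hf y hy⟩

theorem IsExtreme.support_subset_of_integral_mem [FiniteDimensional ℝ E] [BorelSpace E]
    {K F : Set E} (hF : IsExtreme ℝ K F) (hKc : IsClosed K) (hKconv : Convex ℝ K)
    (hμK : ∀ᵐ u ∂μ, u ∈ K) (hint : Integrable id μ) (hβ : ∫ u, u ∂μ ∈ F) :
    μ.support ⊆ F := by
  have : CompleteSpace E := FiniteDimensional.complete ℝ E
  induction hd : finrank ℝ (vectorSpan ℝ K) using Nat.strong_induction_on generalizing K F with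
  | _ d ih =>
  rcases hKconv.exists_supporting_or_mem_openSegment (hF.subset hβ) with
    ⟨f, hfle, z, hz, hlt⟩ | hseg
  · have hβG : ∫ u, u ∂μ ∈ f.toExposed K := ⟨hF.subset hβ, hfle⟩
    have hG : IsExposed ℝ K (f.toExposed K) := ContinuousLinearMap.toExposed.isExposed
    exact (ih _ (hd ▸ f.finrank_vectorSpan_toExposed_lt hβG hz hlt)
      ((hF.inter hG.isExtreme).mono hG.isExtreme.subset inter_subset_right) (hG.isClosed hKc)
      (hG.convex hKconv) (ae_mem_toExposed_of_forall_le_integral hint hμK hfle) ⟨hβ, hβG⟩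
      rfl).trans inter_subset_left
  · refine (Measure.support_subset_of_isClosed hKc hμK).trans fun z hz => ?_
    obtain ⟨w, hw, hzw⟩ := hseg z hz
    exact hF.left_mem_of_mem_openSegment hz hw hβ hzw

end

variable {n : ℕ} {C : Set (EuclideanSpace ℝ (Fin n))} {g : EuclideanSpace ℝ (Fin n) → ℝ}
  {x u : EuclideanSpace ℝ (Fin n)} {μ : Measure (EuclideanSpace ℝ (Fin n))}

theorem msupport_eq_support (μ : Measure (EuclideanSpace ℝ (Fin n))) :
    msupport μ = μ.support := by
  ext y
  rw [(nhds_basis_opens y).mem_measureSupport]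
  simp only [msupport, mem_ofPred_eq, and_imp]
  exact forall_congr' fun U => forall_comm

theorem supDiff_eq_biInter : supDiff C g x = ⋂ z ∈ C, {u | g z - g x ≤ ⟪u, z - x⟫} := by
  ext
  simp [supDiff]

theorem isClosed_supDiff : IsClosed (supDiff C g x) :=
  supDiff_eq_biInter ▸ isClosed_biInter fun _ _ =>
    isClosed_le continuous_const (continuous_id.inner continuous_const)

theorem convex_supDiff : Convex ℝ (supDiff C g x) :=
  supDiff_eq_biInter ▸ convex_iInter₂ fun z _ =>
    convex_halfSpace_ge ⟨fun a b => inner_add_left a b (z - x),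
      fun c a => real_inner_smul_left a (z - x) c⟩ _

theorem bddBelow_lfDual (hC : IsCompact C) (hc : ContinuousOn g C)
    (u : EuclideanSpace ℝ (Fin n)) : BddBelow ((fun z => ⟪u, z⟫ - g z) '' C) :=
  (hC.image_of_continuousOn
    ((continuous_const.inner continuous_id).continuousOn.sub hc)).bddBelow

theorem lfDual_le (hC : IsCompact C) (hc : ContinuousOn g C) {z : EuclideanSpace ℝ (Fin n)}
    (hz : z ∈ C) : lfDual C g u ≤ ⟪u, z⟫ - g z :=
  csInf_le (bddBelow_lfDual hC hc u) ⟨z, hz, rfl⟩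

theorem mem_supDiff_iff_le_lfDual (hC : IsCompact C) (hc : ContinuousOn g C) (hx : x ∈ C) :
    u ∈ supDiff C g x ↔ ⟪u, x⟫ - g x ≤ lfDual C g u := by
  refine ⟨fun h => le_csInf ⟨_, x, hx, rfl⟩ ?_, fun h z hz => ?_⟩
  · rintro _ ⟨z, hz, rfl⟩
    have := h z hz
    rw [inner_sub_right] at this
    linarith
  · have := lfDual_le (u := u) hC hc hz
    rw [inner_sub_right]
    linarith

theorem lipschitzWith_lfDual (hC : IsCompact C) (hc : ContinuousOn g C) (hCne : C.Nonempty)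
    {R : ℝ≥0} (hR : ∀ z ∈ C, ‖z‖ ≤ R) : LipschitzWith R (lfDual C g) := by
  refine LipschitzWith.of_le_add_mul R fun u v => ?_
  suffices lfDual C g u - R * dist u v ≤ lfDual C g v by linarith
  refine le_csInf (hCne.image _) ?_
  rintro _ ⟨z, hz, rfl⟩
  have hle := lfDual_le (u := u) hC hc hz
  have hcs : ⟪u - v, z⟫ ≤ R * dist u v := by
    rw [dist_eq_norm, mul_comm]
    exact (real_inner_le_norm _ _).trans (mul_le_mul_of_nonneg_left (hR z hz) (norm_nonneg _))
  rw [inner_sub_left] at hcs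
  linarith

theorem integrable_lfDual [IsFiniteMeasure μ] (hC : IsCompact C) (hc : ContinuousOn g C)
    (hCne : C.Nonempty) (hint : Integrable id μ) : Integrable (lfDual C g) μ := by
  obtain ⟨R, -, hR⟩ := hC.isBounded.exists_pos_norm_le
  have hL := (lipschitzWith_lfDual (R := R.toNNReal) hC hc hCne fun z hz =>
    (hR z hz).trans (Real.le_coe_toNNReal R)).sub (LipschitzWith.const (lfDual C g 0))
  have := (hL.comp_memLp (by simp) (memLp_one_iff_integrable.2 hint)).integrable le_rfl
  exact (this.add (integrable_const (lfDual C g 0))).congr (ae_of_all _ fun u => by simp)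

/-- The paper's `φ̂`: the defect in the Fenchel–Young inequality `g^∨(u) ≤ ⟪x, u⟫ - g(x)`. -/
noncomputable def fenchelYoungGap (C : Set (EuclideanSpace ℝ (Fin n)))
    (g : EuclideanSpace ℝ (Fin n) → ℝ) (x u : EuclideanSpace ℝ (Fin n)) : ℝ :=
  lfDual C g u - ⟪x, u⟫ + g x

theorem fenchelYoungGap_nonpos (hC : IsCompact C) (hc : ContinuousOn g C) (hx : x ∈ C)
    (u : EuclideanSpace ℝ (Fin n)) : fenchelYoungGap C g x u ≤ 0 := by
  have := lfDual_le (u := u) hC hc hx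
  rw [fenchelYoungGap, real_inner_comm]
  linarith

theorem fenchelYoungGap_eq_zero_iff (hC : IsCompact C) (hc : ContinuousOn g C) (hx : x ∈ C) :
    fenchelYoungGap C g x u = 0 ↔ u ∈ supDiff C g x := by
  have := fenchelYoungGap_nonpos hC hc hx u
  rw [mem_supDiff_iff_le_lfDual hC hc hx]
  rw [fenchelYoungGap, real_inner_comm] at *
  constructor <;> intro h <;> linarith

theorem integrable_fenchelYoungGap [IsFiniteMeasure μ] (hC : IsCompact C)
    (hc : ContinuousOn g C) (hx : x ∈ C) (hint : Integrable id μ) :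
    Integrable (fenchelYoungGap C g x) μ :=
  ((integrable_lfDual hC hc ⟨x, hx⟩ hint).sub (hint.const_inner x)).add (integrable_const _)

theorem integral_fenchelYoungGap_eq_zero_iff [IsFiniteMeasure μ] (hC : IsCompact C)
    (hc : ContinuousOn g C) (hx : x ∈ C) (hint : Integrable id μ) :
    ∫ u, fenchelYoungGap C g x u ∂μ = 0 ↔ ∀ᵐ u ∂μ, u ∈ supDiff C g x := by
  have h := integral_eq_iff_of_ae_le (integrable_fenchelYoungGap hC hc hx hint)
    (integrable_zero _ _ μ) (ae_of_all μ (fenchelYoungGap_nonpos hC hc hx))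
  simp only [Pi.zero_apply, integral_zero] at h
  rw [h]
  exact eventually_congr (ae_of_all _ fun u => fenchelYoungGap_eq_zero_iff hC hc hx)

theorem phiFun_eq_integral_fenchelYoungGap_add [IsProbabilityMeasure μ]
    {g₁ g₂ : EuclideanSpace ℝ (Fin n) → ℝ} (hC : IsCompact C) (hc₁ : ContinuousOn g₁ C)
    (hx : x ∈ C) (hmax : ∀ y ∈ C, g₁ y + g₂ y ≤ g₁ x + g₂ x) (hint : Integrable id μ) :
    phiFun C g₁ g₂ μ =
      ∫ u, fenchelYoungGap C g₁ x u ∂μ + fenchelYoungGap C g₂ x (-∫ u, u ∂μ) := by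
  have hsSup : sSup ((fun y => g₁ y + g₂ y) '' C) = g₁ x + g₂ x :=
    IsGreatest.csSup_eq ⟨⟨x, hx, rfl⟩, by rintro _ ⟨y, hy, rfl⟩; exact hmax y hy⟩
  have hL := integrable_lfDual hC hc₁ ⟨x, hx⟩ hint
  have hI : Integrable (fun u => ⟪x, u⟫) μ := hint.const_inner x
  have hgap : ∫ u, fenchelYoungGap C g₁ x u ∂μ =
      ∫ u, lfDual C g₁ u ∂μ - ⟪x, ∫ u, u ∂μ⟫ + g₁ x := by
    simp only [fenchelYoungGap]
    rw [integral_add (f := fun u => lfDual C g₁ u - ⟪x, u⟫) (hL.sub hI) (integrable_const _),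
      integral_sub hL hI, integral_inner (f := fun u => u) hint, integral_const]
    simp
  rw [phiFun, hsSup, hgap, fenchelYoungGap, inner_neg_right]
  ring

theorem stmt6_general {n : ℕ}
    (C : Set (EuclideanSpace ℝ (Fin n))) (hCcpt : IsCompact C)
    (g₁ g₂ : EuclideanSpace ℝ (Fin n) → ℝ)
    (hc₁ : ContinuousOn g₁ C) (hc₂ : ContinuousOn g₂ C)
    (x : EuclideanSpace ℝ (Fin n))
    (hx : x ∈ {p ∈ C | ∀ y ∈ C, g₁ y + g₂ y ≤ g₁ p + g₂ p})
    (B F : Set (EuclideanSpace ℝ (Fin n)))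
    (hB : B = supDiff C g₁ x ∩ -supDiff C g₂ x)
    (hF : F = ⋂₀ {F' : Set (EuclideanSpace ℝ (Fin n)) |
      IsExtreme ℝ (supDiff C g₁ x) F' ∧ B ⊆ F'})
    (μ : ProbabilityMeasure (EuclideanSpace ℝ (Fin n)))
    (hμ : Integrable (fun u => ‖u‖) (μ : Measure (EuclideanSpace ℝ (Fin n)))) :
    phiFun C g₁ g₂ (μ : Measure (EuclideanSpace ℝ (Fin n))) ≤ 0 ∧
    (phiFun C g₁ g₂ (μ : Measure (EuclideanSpace ℝ (Fin n))) = 0 ↔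
      msupport (μ : Measure (EuclideanSpace ℝ (Fin n))) ⊆ F ∧
        (∫ u, u ∂(μ : Measure (EuclideanSpace ℝ (Fin n)))) ∈ B) := by
  obtain ⟨hxC, hxmax⟩ := hx
  have hint : Integrable id (μ : Measure (EuclideanSpace ℝ (Fin n))) :=
    (integrable_norm_iff aestronglyMeasurable_id).1 hμ
  have h₁ := integral_nonpos (μ := (μ : Measure (EuclideanSpace ℝ (Fin n))))
    (fenchelYoungGap_nonpos hCcpt hc₁ hxC)
  have h₂ := fenchelYoungGap_nonpos hCcpt hc₂ hxC
    (-∫ u, u ∂(μ : Measure (EuclideanSpace ℝ (Fin n))))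
  rw [phiFun_eq_integral_fenchelYoungGap_add hCcpt hc₁ hxC hxmax hint]
  refine ⟨add_nonpos h₁ h₂, ?_⟩
  rw [add_eq_zero_iff_of_nonpos h₁ h₂, integral_fenchelYoungGap_eq_zero_iff hCcpt hc₁ hxC hint,
    fenchelYoungGap_eq_zero_iff hCcpt hc₂ hxC, msupport_eq_support]
  have hFsub : F ⊆ supDiff C g₁ x :=
    hF ▸ sInter_subset_of_mem ⟨IsExtreme.rfl, hB ▸ inter_subset_left⟩
  subst hB hF
  constructor
  · rintro ⟨hae, hβ₂⟩
    have hβ₁ := convex_supDiff.integral_mem isClosed_supDiff hae hint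
    exact ⟨subset_sInter fun F' ⟨hF', hBF'⟩ => hF'.support_subset_of_integral_mem
      isClosed_supDiff convex_supDiff hae hint (hBF' ⟨hβ₁, hβ₂⟩), hβ₁, hβ₂⟩
  · rintro ⟨hsupp, -, hβ₂⟩
    exact ⟨mem_of_superset Measure.support_mem_ae (hsupp.trans hFsub), hβ₂⟩

/-- `Φ` is nonpositive on `ℰ`, and `Φ(μ) = 0` iff `supp(μ) ⊆ F(g₁,g₂)`
and `E[μ] ∈ B(g₁,g₂)`, where for a maximizer `x` of `g₁+g₂` one sets
`B(g₁,g₂) = ∂g₁(x) ∩ (-∂g₂(x))` and `F(g₁,g₂)` is the minimal face of `∂g₁(x)`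
containing `B(g₁,g₂)`. -/
theorem stmt6 {n : ℕ}
    (C : Set (EuclideanSpace ℝ (Fin n))) (hCcpt : IsCompact C) (hCconv : Convex ℝ C)
    (hCint : (interior C).Nonempty)
    (g₁ g₂ : EuclideanSpace ℝ (Fin n) → ℝ)
    (hg₁ : ConcaveOn ℝ C g₁) (hg₂ : ConcaveOn ℝ C g₂)
    (hc₁ : ContinuousOn g₁ C) (hc₂ : ContinuousOn g₂ C)
    (x : EuclideanSpace ℝ (Fin n))
    (hx : x ∈ {p ∈ C | ∀ y ∈ C, g₁ y + g₂ y ≤ g₁ p + g₂ p})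
    (B F : Set (EuclideanSpace ℝ (Fin n)))
    (hB : B = supDiff C g₁ x ∩ -supDiff C g₂ x)
    (hF : F = ⋂₀ {F' : Set (EuclideanSpace ℝ (Fin n)) |
      IsExtreme ℝ (supDiff C g₁ x) F' ∧ B ⊆ F'})
    (μ : ProbabilityMeasure (EuclideanSpace ℝ (Fin n)))
    (hμ : Integrable (fun u => ‖u‖) (μ : Measure (EuclideanSpace ℝ (Fin n)))) :
    phiFun C g₁ g₂ (μ : Measure (EuclideanSpace ℝ (Fin n))) ≤ 0 ∧
    (phiFun C g₁ g₂ (μ : Measure (EuclideanSpace ℝ (Fin n))) = 0 ↔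
      msupport (μ : Measure (EuclideanSpace ℝ (Fin n))) ⊆ F ∧
        (∫ u, u ∂(μ : Measure (EuclideanSpace ℝ (Fin n)))) ∈ B) :=
  stmt6_general C hCcpt g₁ g₂ hc₁ hc₂ x hx B F hB hF μ hμ
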